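/- Let x, y ∈ Lip(□^d, ℝ^n) and L, ε > 0 satisfy ‖d̂x‖_∞ ≤ L, ‖d̂y‖_∞ ≤ L, and μ_∞(x,y) ≤ ε. Then for every m ≥ 1 and every level-m index (P,π) ∈ O_{d,n}^m × Σ_m^d, |Φ_m^{P,π}(x) − Φ_m^{P,π}(y)| ≤ m · L^{m−1} · ε / (m!)^d. -/

import Mathlib

open MeasureTheory

open scoped Classical

noncomputable section

/-- The unit cube `[0,1]^d` as a subset of `Fin d → ℝ`. -/
def unitCube (d : ℕ) : Set (Fin d → ℝ) := Set.Icc 0 1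

/-- Lipschitz condition with constant `L`, with respect to Euclidean norms. -/
def EuclidLip {d n : ℕ} (L : ℝ) (x : (Fin d → ℝ) → Fin n → ℝ) : Prop :=
  ∀ s t : Fin d → ℝ,
    Real.sqrt (∑ k, (x s k - x t k) ^ 2) ≤ L * Real.sqrt (∑ j, (s j - t j) ^ 2)

/-- Lipschitz map. -/
def IsLipMap {d n : ℕ} (x : (Fin d → ℝ) → Fin n → ℝ) : Prop :=
  ∃ L : ℝ, EuclidLip L x

/-- The Jacobian minor `J[x_P](s)`: the determinant of the `d × d` matrix
with `(i,j)` entry `∂ x_{P i} / ∂ s_j (s)`. -/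
def jacobianMinor {d n : ℕ} (x : (Fin d → ℝ) → Fin n → ℝ) (P : Fin d → Fin n)
    (s : Fin d → ℝ) : ℝ :=
  (Matrix.of fun i j : Fin d => fderiv ℝ (fun t => x t (P i)) s (Pi.single j 1)).det

/-- The permuted `m`-simplex `Δ^m_π(a,b)`. -/
def permSimplex {m : ℕ} (π : Equiv.Perm (Fin m)) (a b : ℝ) : Set (Fin m → ℝ) :=
  {u | (∀ i, u i ∈ Set.Icc a b) ∧ StrictMono fun i => u (π i)}

/-- The integration domain `D^{m,d}_π(a,b) = Δ^m_{π 1}(a₁,b₁) × ⋯ × Δ^m_{π d}(a_d,b_d)`. -/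
def intDomain {m d : ℕ} (π : Fin d → Equiv.Perm (Fin m)) (a b : Fin d → ℝ) :
    Set (Fin m → Fin d → ℝ) :=
  {t | ∀ j, (fun i => t i j) ∈ permSimplex (π j) (a j) (b j)}

/-- The restricted mapping space monomial `Φ_m^{P,π}(x)_{a,b}`. -/
def msMonomialOn {d n m : ℕ} (x : (Fin d → ℝ) → Fin n → ℝ)
    (P : Fin m → Fin d → Fin n) (π : Fin d → Equiv.Perm (Fin m))
    (a b : Fin d → ℝ) : ℝ :=
  ∫ t in intDomain π a b, ∏ i, jacobianMinor x (P i) (t i)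

/-- The mapping space monomial `Φ_m^{P,π}(x)`. -/
def msMonomial {d n m : ℕ} (x : (Fin d → ℝ) → Fin n → ℝ)
    (P : Fin m → Fin d → Fin n) (π : Fin d → Equiv.Perm (Fin m)) : ℝ :=
  msMonomialOn x P π (fun _ => 0) (fun _ => 1)

/-- The Jacobian Lipschitz norm `‖d̂x‖_∞ = ess sup_s (Σ_{P ∈ O_{d,n}} J[x_P](s)²)^{1/2}`. -/
def jacNorm (d n : ℕ) (x : (Fin d → ℝ) → Fin n → ℝ) : ℝ :=
  essSup (fun s => Real.sqrt
      (∑ P ∈ Finset.univ.filter (fun P : Fin d → Fin n => StrictMono P),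
        (jacobianMinor x P s) ^ 2))
    (volume.restrict (unitCube d))

/-- The Jacobian Lipschitz metric `μ_∞(x,y)`. -/
def muInfty (d n : ℕ) (x y : (Fin d → ℝ) → Fin n → ℝ) : ℝ :=
  essSup (fun s => Real.sqrt
      (∑ P ∈ Finset.univ.filter (fun P : Fin d → Fin n => StrictMono P),
        (jacobianMinor x P s - jacobianMinor y P s) ^ 2))
    (volume.restrict (unitCube d))
/-!
On `D = Δ^m_{π₁} × ⋯ × Δ^m_{π_d}` the two integrands differ by the telescoping sum
`∏ aᵢ - ∏ bᵢ = ∑ₖ a₁ ⋯ aₖ₋₁ (aₖ - bₖ) bₖ₊₁ ⋯ bₘ`. Every row `tᵢ` of a point of `D` lies in the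
unit cube, where the essential suprema bound each strictly increasing minor a.e. (Lipschitz
continuity makes the minors bounded, so these real essential suprema are not junk values);
hence the integrands differ by at most `m L^(m-1) ε` a.e. on `D`. Finally `vol D = (m!)^(-d)`:
the `m!` permuted simplices `Δ^m_σ` are pairwise disjoint, have equal volume since permuting
coordinates preserves Lebesgue measure, and cover the cube up to the null set of points with two
equal coordinates; transposing `t ↦ (j ↦ (i ↦ tᵢⱼ))` turns `D` into a product of simplices.
-/

open scoped ENNReal

open Finset in
theorem abs_prod_sub_prod_le {ι : Type*} (s : Finset ι) {f g : ι → ℝ} {L ε : ℝ}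
    (hf : ∀ i ∈ s, |f i| ≤ L) (hg : ∀ i ∈ s, |g i| ≤ L) (hfg : ∀ i ∈ s, |f i - g i| ≤ ε) :
    |∏ i ∈ s, f i - ∏ i ∈ s, g i| ≤ #s * L ^ (#s - 1) * ε := by
  classical
  induction s using Finset.induction_on with
  | empty => simp
  | insert a s ha ih =>
    simp only [mem_insert, forall_eq_or_imp] at hf hg hfg
    have hL : 0 ≤ L := (abs_nonneg _).trans hg.1
    have hε : 0 ≤ ε := (abs_nonneg _).trans hfg.1
    have hprod : |∏ i ∈ s, f i| ≤ L ^ #s := by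
      rw [abs_prod, ← prod_const]
      exact prod_le_prod (fun _ _ => abs_nonneg _) hf.2
    have hL_pow : L * (#s * L ^ (#s - 1)) = #s * L ^ #s := by
      rcases Nat.eq_zero_or_pos #s with h | h
      · simp [h]
      · rw [mul_left_comm, mul_pow_sub_one h.ne']
    rw [prod_insert ha, prod_insert ha, card_insert_of_notMem ha, Nat.add_sub_cancel]
    calc |f a * ∏ i ∈ s, f i - g a * ∏ i ∈ s, g i|
        = |(f a - g a) * ∏ i ∈ s, f i + g a * (∏ i ∈ s, f i - ∏ i ∈ s, g i)| := by ring_nf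
      _ ≤ ε * L ^ #s + L * (#s * L ^ (#s - 1) * ε) := by
        grw [abs_add_le, abs_mul, abs_mul, hfg.1, hprod, hg.1, ih hf.2 hg.2 hfg.2]
      _ = (#s + 1 : ℕ) * L ^ #s * ε := by
        push_cast
        linear_combination ε * hL_pow

theorem sqrt_sum_sq_sub_le {d : ℕ} (s t : Fin d → ℝ) :
    √(∑ j, (s j - t j) ^ 2) ≤ √d * ‖s - t‖ := by
  rw [← Real.sqrt_sq (norm_nonneg (s - t)), ← Real.sqrt_mul (Nat.cast_nonneg d)]
  refine Real.sqrt_le_sqrt ?_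
  have hj : ∀ j, |s j - t j| ≤ ‖s - t‖ := norm_le_pi_norm (s - t)
  simpa using Finset.sum_le_card_nsmul Finset.univ _ _ fun j _ =>
    sq_le_sq' (neg_le_of_abs_le (hj j)) (le_of_abs_le (hj j))

theorem EuclidLip.norm_fderiv_le {d n : ℕ} {L : ℝ} {x : (Fin d → ℝ) → Fin n → ℝ}
    (hx : EuclidLip L x) (k : Fin n) (s : Fin d → ℝ) :
    ‖fderiv ℝ (fun t => x t k) s‖ ≤ |L| * √d := by
  refine norm_fderiv_le_of_lip' ℝ (by positivity) (Filter.Eventually.of_forall fun t => ?_)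
  calc ‖x t k - x s k‖ ≤ √(∑ k', (x t k' - x s k') ^ 2) :=
        Real.abs_le_sqrt (Finset.single_le_sum (fun k' _ => sq_nonneg (x t k' - x s k'))
          (Finset.mem_univ k))
    _ ≤ L * √(∑ j, (t j - s j) ^ 2) := hx t s
    _ ≤ |L| * (√d * ‖t - s‖) := by
        grw [le_abs_self L, sqrt_sum_sq_sub_le]
    _ = |L| * √d * ‖t - s‖ := by ring

theorem IsLipMap.exists_abs_jacobianMinor_le {d n : ℕ} {x : (Fin d → ℝ) → Fin n → ℝ}
    (hx : IsLipMap x) : ∃ M, ∀ P s, |jacobianMinor x P s| ≤ M := by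
  obtain ⟨L, hL⟩ := hx
  refine ⟨d.factorial • (|L| * √d) ^ d, fun P s => ?_⟩
  have hentry : ∀ i j, |fderiv ℝ (fun t => x t (P i)) s (Pi.single j 1)| ≤ |L| * √d :=
    fun i j => by
      simpa [Pi.norm_single] using (fderiv ℝ (fun t => x t (P i)) s).le_of_opNorm_le
        (hL.norm_fderiv_le (P i) s) (Pi.single j 1)
  have hdet := Matrix.det_le (abv := AbsoluteValue.abs)
    (A := Matrix.of fun i j => fderiv ℝ (fun t => x t (P i)) s (Pi.single j 1)) hentry
  rw [jacobianMinor]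
  simpa only [AbsoluteValue.abs_apply, Fintype.card_fin] using hdet

@[fun_prop]
theorem measurable_jacobianMinor {d n : ℕ} (x : (Fin d → ℝ) → Fin n → ℝ) (P : Fin d → Fin n) :
    Measurable (jacobianMinor x P) := by
  unfold jacobianMinor
  simp only [Matrix.det_apply, Matrix.of_apply]
  fun_prop

theorem ae_forall_abs_le_of_essSup_sqrt_sum_sq_le {α ι : Type*} [MeasurableSpace α]
    {μ : Measure α} {S : Finset ι} {F : ι → α → ℝ} {M L : ℝ} (hF : ∀ i s, |F i s| ≤ M)
    (h : essSup (fun s => √(∑ i ∈ S, F i s ^ 2)) μ ≤ L) :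
    ∀ᵐ s ∂μ, ∀ i ∈ S, |F i s| ≤ L := by
  have hbdd : Filter.IsBoundedUnder (· ≤ ·) (ae μ) fun s => √(∑ i ∈ S, F i s ^ 2) :=
    Filter.isBoundedUnder_of ⟨√(∑ _i ∈ S, M ^ 2), fun s => Real.sqrt_le_sqrt <|
      Finset.sum_le_sum fun i _ => sq_le_sq' (neg_le_of_abs_le (hF i s)) (le_of_abs_le (hF i s))⟩
  filter_upwards [ae_le_essSup hbdd] with s hs i hi
  calc |F i s| ≤ √(∑ i ∈ S, F i s ^ 2) :=
        Real.abs_le_sqrt (Finset.single_le_sum (fun i _ => sq_nonneg (F i s)) hi)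
    _ ≤ L := hs.trans h

theorem IsLipMap.ae_forall_abs_jacobianMinor_le {d n : ℕ} {x : (Fin d → ℝ) → Fin n → ℝ}
    (hx : IsLipMap x) {L : ℝ} (hL : jacNorm d n x ≤ L) :
    ∀ᵐ s ∂volume.restrict (unitCube d), ∀ P, StrictMono P → |jacobianMinor x P s| ≤ L := by
  obtain ⟨M, hM⟩ := hx.exists_abs_jacobianMinor_le
  filter_upwards [ae_forall_abs_le_of_essSup_sqrt_sum_sq_le hM hL] with s hs P hP
  exact hs P (Finset.mem_filter.2 ⟨Finset.mem_univ P, hP⟩)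

theorem IsLipMap.ae_forall_abs_jacobianMinor_sub_le {d n : ℕ} {x y : (Fin d → ℝ) → Fin n → ℝ}
    (hx : IsLipMap x) (hy : IsLipMap y) {ε : ℝ} (hε : muInfty d n x y ≤ ε) :
    ∀ᵐ s ∂volume.restrict (unitCube d), ∀ P, StrictMono P →
      |jacobianMinor x P s - jacobianMinor y P s| ≤ ε := by
  obtain ⟨Mx, hMx⟩ := hx.exists_abs_jacobianMinor_le
  obtain ⟨My, hMy⟩ := hy.exists_abs_jacobianMinor_le
  have hM : ∀ P s, |jacobianMinor x P s - jacobianMinor y P s| ≤ Mx + My := fun P s =>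
    (abs_sub _ _).trans (add_le_add (hMx P s) (hMy P s))
  filter_upwards [ae_forall_abs_le_of_essSup_sqrt_sum_sq_le hM hε] with s hs P hP
  exact hs P (Finset.mem_filter.2 ⟨Finset.mem_univ P, hP⟩)

section PermSimplex

open Equiv Function Set

variable {m : ℕ}

theorem measurableSet_permSimplex (π : Perm (Fin m)) (a b : ℝ) :
    MeasurableSet (permSimplex π a b) := by
  have h : permSimplex π a b = (⋂ i, (fun u => u i) ⁻¹' Icc a b) ∩
      ⋂ (i) (j) (_ : i < j), {u : Fin m → ℝ | u (π i) < u (π j)} := by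
    ext u
    simp [permSimplex, StrictMono]
  rw [h]
  exact (MeasurableSet.iInter fun i => measurableSet_Icc.preimage (measurable_pi_apply i)).inter
    (.iInter fun i => .iInter fun j => .iInter fun _ =>
      measurableSet_lt (measurable_pi_apply _) (measurable_pi_apply _))

theorem preimage_comp_permSimplex (σ τ : Perm (Fin m)) (a b : ℝ) :
    (fun u : Fin m → ℝ => u ∘ σ) ⁻¹' permSimplex τ a b = permSimplex (σ * τ) a b := by
  ext u
  simp only [permSimplex, mem_preimage, mem_ofPred_eq, comp_apply, Perm.mul_apply,
    and_congr_left_iff]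
  exact fun _ => σ.forall_congr_right (q := fun i => u i ∈ Icc a b)

theorem volume_permSimplex_eq (σ τ : Perm (Fin m)) (a b : ℝ) :
    volume (permSimplex σ a b) = volume (permSimplex τ a b) := by
  have hρ : MeasurePreserving (fun u : Fin m → ℝ => u ∘ (σ * τ⁻¹)) :=
    volume_preserving_arrowCongr' (σ * τ⁻¹).symm (MeasurableEquiv.refl ℝ) (.id volume)
  rw [← hρ.measure_preimage (measurableSet_permSimplex τ a b).nullMeasurableSet,
    preimage_comp_permSimplex, inv_mul_cancel_right]

theorem injective_of_mem_permSimplex {π : Perm (Fin m)} {a b : ℝ} {u : Fin m → ℝ}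
    (hu : u ∈ permSimplex π a b) : Injective u :=
  (π.injective_comp u).1 hu.2.injective

theorem pairwise_disjoint_permSimplex (a b : ℝ) :
    Pairwise (Disjoint on fun π : Perm (Fin m) => permSimplex π a b) := by
  refine fun σ τ hne => disjoint_left.2 fun u hσ hτ => hne ?_
  have h := Tuple.unique_monotone hσ.2.monotone hτ.2.monotone
  exact Equiv.ext fun i => injective_of_mem_permSimplex hσ (congrFun h i)

theorem iUnion_permSimplex (a b : ℝ) :
    ⋃ π : Perm (Fin m), permSimplex π a b =
      Icc (fun _ => a) (fun _ => b) ∩ {u | Injective u} := by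
  ext u
  simp only [mem_iUnion, mem_inter_iff, mem_Icc, mem_ofPred_eq]
  constructor
  · rintro ⟨π, hu⟩
    exact ⟨⟨fun i => (hu.1 i).1, fun i => (hu.1 i).2⟩, injective_of_mem_permSimplex hu⟩
  · rintro ⟨⟨ha, hb⟩, hinj⟩
    exact ⟨Tuple.sort u, fun i => ⟨ha i, hb i⟩,
      (Tuple.monotone_sort u).strictMono_of_injective (hinj.comp (Tuple.sort u).injective)⟩

theorem volume_setOf_not_injective {ι : Type*} [Fintype ι] :
    volume {u : ι → ℝ | ¬ Injective u} = 0 := by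
  classical
  have hsub : {u : ι → ℝ | ¬ Injective u} ⊆ ⋃ (i) (j) (_ : i ≠ j), {u | u i = u j} := by
    intro u hu
    obtain ⟨i, j, hij, hne⟩ := Function.not_injective_iff.1 hu
    exact mem_iUnion₂.2 ⟨i, j, mem_iUnion.2 ⟨hne, hij⟩⟩
  refine measure_mono_null hsub (measure_iUnion_null fun i => measure_iUnion_null fun j =>
    measure_iUnion_null fun hij => ?_)
  let φ : (ι → ℝ) →ₗ[ℝ] ℝ := LinearMap.proj (R := ℝ) (φ := fun _ => ℝ) i - LinearMap.proj j
  have hker : {u : ι → ℝ | u i = u j} = LinearMap.ker φ := by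
    ext u
    simp [φ, sub_eq_zero]
  rw [hker]
  refine Measure.addHaar_submodule _ _ fun htop => ?_
  simpa [φ, hij] using LinearMap.congr_fun (LinearMap.ker_eq_top.1 htop) (Pi.single i 1)

theorem volume_permSimplex (π : Perm (Fin m)) (a b : ℝ) :
    volume (permSimplex π a b) = ENNReal.ofReal (b - a) ^ m / m.factorial := by
  have hunion := measure_iUnion (μ := volume) (pairwise_disjoint_permSimplex (m := m) a b)
    (measurableSet_permSimplex · a b)
  rw [tsum_fintype, iUnion_permSimplex, measure_inter_conull
    (by rw [compl_ofPred]; exact volume_setOf_not_injective), Real.volume_Icc_pi] at hunion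
  simp_rw [volume_permSimplex_eq _ π, Finset.sum_const, Finset.card_univ, Fintype.card_perm,
    Fintype.card_fin, nsmul_eq_mul] at hunion
  rw [ENNReal.eq_div_iff (by positivity) (by simp), ← hunion]
  simp

end PermSimplex

theorem measurePreserving_transpose (ι κ α : Type*) [Fintype ι] [Fintype κ] [MeasureSpace α]
    [SigmaFinite (volume : Measure α)] :
    MeasurePreserving (fun (t : ι → κ → α) (j : κ) (i : ι) => t i j) := by
  have hT : Measurable fun (t : ι → κ → α) (j : κ) (i : ι) => t i j := by fun_prop
  refine ⟨hT, (Measure.pi_eq_generateFrom (fun _ => generateFrom_pi) (fun _ => isPiSystem_pi)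
    (fun _ => Measure.FiniteSpanningSetsIn.pi fun _ => (volume : Measure α).toFiniteSpanningSetsIn)
    fun s hs => ?_).symm⟩
  choose r hr hrs using hs
  obtain rfl : s = fun j => Set.univ.pi (r j) := funext fun j => (hrs j).symm
  have hpre : (fun (t : ι → κ → α) (j : κ) (i : ι) => t i j) ⁻¹'
      Set.univ.pi (fun j => Set.univ.pi (r j)) =
        Set.univ.pi fun i => Set.univ.pi fun j => r j i := by
    ext t
    simpa using forall_comm
  rw [Measure.map_apply hT (.univ_pi fun j => .univ_pi fun i => hr j i (Set.mem_univ i)), hpre]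
  simp only [volume_pi_pi, Measure.pi_pi]
  rw [Finset.prod_comm]

theorem intDomain_eq_preimage {m d : ℕ} (π : Fin d → Equiv.Perm (Fin m)) (a b : Fin d → ℝ) :
    intDomain π a b = (fun (t : Fin m → Fin d → ℝ) j i => t i j) ⁻¹'
      Set.univ.pi fun j => permSimplex (π j) (a j) (b j) := by
  ext t
  simp [intDomain]

theorem volume_intDomain {m d : ℕ} (π : Fin d → Equiv.Perm (Fin m)) (a b : Fin d → ℝ) :
    volume (intDomain π a b) = ∏ j, ENNReal.ofReal (b j - a j) ^ m / m.factorial := by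
  rw [intDomain_eq_preimage, (measurePreserving_transpose _ _ _).measure_preimage
    (MeasurableSet.univ_pi fun j => measurableSet_permSimplex _ _ _).nullMeasurableSet,
    volume_pi_pi]
  simp only [volume_permSimplex]

theorem intDomain_subset_univ_pi {m d : ℕ} (π : Fin d → Equiv.Perm (Fin m)) (a b : Fin d → ℝ) :
    intDomain π a b ⊆ Set.univ.pi fun _ => Set.Icc a b :=
  fun _ ht i _ => ⟨fun j => ((ht j).1 i).1, fun j => ((ht j).1 i).2⟩

theorem ae_restrict_univ_pi_forall {ι α : Type*} [Fintype ι] [MeasureSpace α]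
    [SigmaFinite (volume : Measure α)] {S : Set α} {p : α → Prop}
    (h : ∀ᵐ s ∂volume.restrict S, p s) :
    ∀ᵐ t ∂volume.restrict (Set.univ.pi fun _ : ι => S), ∀ i, p (t i) := by
  rw [volume_pi, Measure.restrict_pi_pi]
  exact Filter.eventually_all.2 fun i => Measure.tendsto_eval_ae_ae.eventually h

theorem IsLipMap.integrableOn_prod_jacobianMinor {d n m : ℕ} {x : (Fin d → ℝ) → Fin n → ℝ}
    (hx : IsLipMap x) (P : Fin m → Fin d → Fin n) {D : Set (Fin m → Fin d → ℝ)}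
    (hD : volume D ≠ ⊤) : IntegrableOn (fun t => ∏ i, jacobianMinor x (P i) (t i)) D := by
  obtain ⟨M, hM⟩ := hx.exists_abs_jacobianMinor_le
  refine Measure.integrableOn_of_bounded (M := M ^ m) hD
    (by fun_prop : Measurable _).aestronglyMeasurable (ae_of_all _ fun t => ?_)
  simpa [Finset.abs_prod] using
    Finset.prod_le_prod (s := Finset.univ) (fun i _ => abs_nonneg _) fun i _ => hM (P i) (t i)

theorem stmt7_general (d n m : ℕ) (L ε : ℝ)
    (x y : (Fin d → ℝ) → Fin n → ℝ) (hx : IsLipMap x) (hy : IsLipMap y)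
    (hxb : jacNorm d n x ≤ L) (hyb : jacNorm d n y ≤ L)
    (hdiff : muInfty d n x y ≤ ε)
    (P : Fin m → Fin d → Fin n) (hP : ∀ i, StrictMono (P i))
    (π : Fin d → Equiv.Perm (Fin m)) :
    |msMonomial x P π - msMonomial y P π| ≤
      m * L ^ (m - 1) * ε / (Nat.factorial m : ℝ) ^ d := by
  set D := intDomain π (fun _ => (0 : ℝ)) (fun _ => 1)
  have hD : volume D = (m.factorial : ℝ≥0∞)⁻¹ ^ d := by
    simp [D, volume_intDomain]
  have hD_fin : volume D ≠ ⊤ := by simp [hD, Nat.factorial_ne_zero]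
  have hcube : ∀ᵐ s ∂volume.restrict (unitCube d), ∀ Q, StrictMono Q →
      |jacobianMinor x Q s| ≤ L ∧ |jacobianMinor y Q s| ≤ L ∧
        |jacobianMinor x Q s - jacobianMinor y Q s| ≤ ε := by
    filter_upwards [hx.ae_forall_abs_jacobianMinor_le hxb, hy.ae_forall_abs_jacobianMinor_le hyb,
      hx.ae_forall_abs_jacobianMinor_sub_le hy hdiff] with s h₁ h₂ h₃ Q hQ
    exact ⟨h₁ Q hQ, h₂ Q hQ, h₃ Q hQ⟩
  have hrows := ae_restrict_of_ae_restrict_of_subset (intDomain_subset_univ_pi π _ _)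
    (ae_restrict_univ_pi_forall (ι := Fin m) hcube)
  have hbound : ∀ᵐ t ∂volume.restrict D,
      ‖∏ i, jacobianMinor x (P i) (t i) - ∏ i, jacobianMinor y (P i) (t i)‖ ≤
        m * L ^ (m - 1) * ε := by
    filter_upwards [hrows] with t ht
    simpa using abs_prod_sub_prod_le Finset.univ (fun i _ => (ht i (P i) (hP i)).1)
      (fun i _ => (ht i (P i) (hP i)).2.1) (fun i _ => (ht i (P i) (hP i)).2.2)
  calc |msMonomial x P π - msMonomial y P π|
      = ‖∫ t in D, (∏ i, jacobianMinor x (P i) (t i) - ∏ i, jacobianMinor y (P i) (t i))‖ := by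
        rw [integral_sub (hx.integrableOn_prod_jacobianMinor P hD_fin)
          (hy.integrableOn_prod_jacobianMinor P hD_fin)]
        rfl
    _ ≤ m * L ^ (m - 1) * ε * volume.real D :=
        norm_setIntegral_le_of_norm_le_const_ae hD_fin.lt_top hbound
    _ = m * L ^ (m - 1) * ε / (Nat.factorial m : ℝ) ^ d := by
        simp [measureReal_def, hD, div_eq_mul_inv]

/-- Lipschitz-type continuity estimate for the monomials:
if `‖d̂x‖_∞ ≤ L`, `‖d̂y‖_∞ ≤ L` and `μ_∞(x,y) ≤ ε` then
`|Φ_m^{P,π}(x) − Φ_m^{P,π}(y)| ≤ m L^{m−1} ε/(m!)^d`. -/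
theorem stmt7 (d n m : ℕ) (hd : 1 ≤ d) (hn : d ≤ n) (hm : 1 ≤ m) (L ε : ℝ)
    (hL : 0 < L) (hε : 0 < ε)
    (x y : (Fin d → ℝ) → Fin n → ℝ) (hx : IsLipMap x) (hy : IsLipMap y)
    (hxb : jacNorm d n x ≤ L) (hyb : jacNorm d n y ≤ L)
    (hdiff : muInfty d n x y ≤ ε)
    (P : Fin m → Fin d → Fin n) (hP : ∀ i, StrictMono (P i))
    (π : Fin d → Equiv.Perm (Fin m)) :
    |msMonomial x P π - msMonomial y P π| ≤
      m * L ^ (m - 1) * ε / (Nat.factorial m : ℝ) ^ d :=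
  stmt7_general d n m L ε x y hx hy hxb hyb hdiff P hP π
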